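/- arXiv:2509.00421 — 2 statements merged into one kernel-verified Lean document; each statement's English description precedes it below -/
import Mathlib

section
/- Let τ be a one-layer transformer with h heads and embedding dimension d: τ(X)_{:,l} = MLP(Att(X_{:,l}, X) + X_{:,l}) for X ∈ ℝ^{d×m}, where Att is h-head self-attention with head attentions Att^1, …, Att^h, and MLP(x) = W_2 ReLU(W_1 x + b_1) + b_2 + x with ‖W_1‖₂·‖W_2‖₂ < 1. Let x_0, x_1, …, x_{h+1} ∈ ℝ^d and set a_i^k = Att^k(x_0, [x_i, x_0]) for i ∈ {1,…,h+1}, k ∈ {1,…,h}. Let y'_1, …, y'_{h+1} ∈ ℝ^d be nonzero, pairwise orthogonal, and orthogonal to every a_i^k, and set y_i = MLP(y'_i + x_0). Then for every m_p ∈ ℕ and every P ∈ ℝ^{d×m_p}, there exists i ∈ {1,…,h+1} such that the last column of τ([P, x_i, x_0]) differs from y_i. -/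
/-- Softmax of a real vector. -/
noncomputable def softmax {n : ℕ} (z : Fin n → ℝ) : Fin n → ℝ :=
  fun j => Real.exp (z j) / ∑ l, Real.exp (z l)

/-- The attention of a query `x` within a context `X` for a single head
with matrices `WQ, WK, WV, WO`. -/
noncomputable def headAtt {s s' d m : ℕ}
    (WQ WK : Matrix (Fin s) (Fin d) ℝ) (WV : Matrix (Fin s') (Fin d) ℝ)
    (WO : Matrix (Fin d) (Fin s') ℝ)
    (x : Fin d → ℝ) (X : Matrix (Fin d) (Fin m) ℝ) : Fin d → ℝ :=
  ∑ j, softmax (fun j' => dotProduct (WK.mulVec fun i => X i j') (WQ.mulVec x)) j •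
    WO.mulVec (WV.mulVec fun i => X i j)

/-- The MLP layer `x ↦ W₂ ReLU(W₁ x + b₁) + b₂ + x` (with residual connection). -/
noncomputable def mlp {d dff : ℕ} (W1 : Matrix (Fin dff) (Fin d) ℝ)
    (W2 : Matrix (Fin d) (Fin dff) ℝ) (b1 : Fin dff → ℝ) (b2 : Fin d → ℝ)
    (x : Fin d → ℝ) : Fin d → ℝ :=
  W2.mulVec (fun i => max (W1.mulVec x i + b1 i) 0) + b2 + x

/-- One-layer `h`-head transformer: `τ(X)_{:,l} = MLP(Att(X_{:,l}, X) + X_{:,l})`. -/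
noncomputable def tf {h s s' d dff n : ℕ}
    (WQ WK : Fin h → Matrix (Fin s) (Fin d) ℝ)
    (WV : Fin h → Matrix (Fin s') (Fin d) ℝ)
    (WO : Fin h → Matrix (Fin d) (Fin s') ℝ)
    (W1 : Matrix (Fin dff) (Fin d) ℝ) (W2 : Matrix (Fin d) (Fin dff) ℝ)
    (b1 : Fin dff → ℝ) (b2 : Fin d → ℝ)
    (X : Matrix (Fin d) (Fin n) ℝ) : Matrix (Fin d) (Fin n) ℝ :=
  Matrix.of fun i l => mlp W1 W2 b1 b2
    ((∑ k, headAtt (WQ k) (WK k) (WV k) (WO k) (fun r => X r l) X) + fun r => X r l) i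

/-- Euclidean norm of a real vector. -/
noncomputable def eucNorm {n : ℕ} (v : Fin n → ℝ) : ℝ :=
  Real.sqrt (∑ i, v i ^ 2)

/-- Spectral (ℓ²-operator) norm of a real matrix. -/
noncomputable def specNorm {a b : ℕ} (W : Matrix (Fin a) (Fin b) ℝ) : ℝ :=
  sSup {c : ℝ | ∃ x : Fin b → ℝ, eucNorm x ≤ 1 ∧ c = eucNorm (W.mulVec x)}

/-- Horizontal concatenation `[A, B]` of two matrices with `d` rows. -/
def hcat {d m₁ m₂ : ℕ} (A : Matrix (Fin d) (Fin m₁) ℝ) (B : Matrix (Fin d) (Fin m₂) ℝ) :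
    Matrix (Fin d) (Fin (m₁ + m₂)) ℝ :=
  Matrix.of fun i => Fin.append (A i) (B i)

/-- The `d × 2` matrix `[u, v]` with columns `u` and `v`. -/
def two {d : ℕ} (u v : Fin d → ℝ) : Matrix (Fin d) (Fin 2) ℝ :=
  Matrix.of fun i => ![u i, v i]

lemma eucNorm_nonneg {n : ℕ} (v : Fin n → ℝ) : 0 ≤ eucNorm v := Real.sqrt_nonneg _

lemma eucNorm_eq_zero {n : ℕ} {v : Fin n → ℝ} (h : eucNorm v = 0) : v = 0 := by
  have hs : ∑ i, v i ^ 2 = 0 := by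
    have h1 := Real.sqrt_eq_zero'.mp h
    exact le_antisymm h1 (Finset.sum_nonneg fun i _ => sq_nonneg _)
  funext i
  have := (Finset.sum_eq_zero_iff_of_nonneg (fun i _ => sq_nonneg (v i))).mp hs i (Finset.mem_univ i)
  simpa [pow_eq_zero_iff] using this

lemma eucNorm_smul {n : ℕ} (t : ℝ) (v : Fin n → ℝ) :
    eucNorm (t • v) = |t| * eucNorm v := by
  unfold eucNorm
  have : ∑ i, (t • v) i ^ 2 = t ^ 2 * ∑ i, v i ^ 2 := by
    rw [Finset.mul_sum]; apply Finset.sum_congr rfl; intro i _; simp [mul_pow]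
  rw [this, Real.sqrt_mul (sq_nonneg t), Real.sqrt_sq_eq_abs]

lemma eucNorm_mono {n : ℕ} {u v : Fin n → ℝ} (h : ∀ i, |u i| ≤ |v i|) :
    eucNorm u ≤ eucNorm v := by
  apply Real.sqrt_le_sqrt
  apply Finset.sum_le_sum
  intro i _
  rw [← sq_abs (u i), ← sq_abs (v i)]
  exact pow_le_pow_left₀ (abs_nonneg _) (h i) 2

lemma eucNorm_mulVec_le_frob {a b : ℕ} (W : Matrix (Fin a) (Fin b) ℝ) (x : Fin b → ℝ) :
    eucNorm (W.mulVec x) ≤ Real.sqrt (∑ i, ∑ j, W i j ^ 2) * eucNorm x := by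
  unfold eucNorm
  rw [← Real.sqrt_mul (Finset.sum_nonneg fun i _ => Finset.sum_nonneg fun j _ => sq_nonneg _ :
    (0:ℝ) ≤ ∑ i, ∑ j, W i j ^ 2)]
  apply Real.sqrt_le_sqrt
  rw [Finset.sum_mul]
  apply Finset.sum_le_sum
  intro i _
  calc W.mulVec x i ^ 2 = (∑ j, W i j * x j) ^ 2 := by rfl
    _ ≤ (∑ j, W i j ^ 2) * ∑ j, x j ^ 2 :=
        Finset.sum_mul_sq_le_sq_mul_sq _ _ _

lemma specNorm_bddAbove {a b : ℕ} (W : Matrix (Fin a) (Fin b) ℝ) :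
    BddAbove {c : ℝ | ∃ x : Fin b → ℝ, eucNorm x ≤ 1 ∧ c = eucNorm (W.mulVec x)} := by
  refine ⟨Real.sqrt (∑ i, ∑ j, W i j ^ 2), ?_⟩
  rintro c ⟨x, hx, rfl⟩
  calc eucNorm (W.mulVec x) ≤ Real.sqrt (∑ i, ∑ j, W i j ^ 2) * eucNorm x :=
        eucNorm_mulVec_le_frob W x
    _ ≤ Real.sqrt (∑ i, ∑ j, W i j ^ 2) * 1 := by
        exact mul_le_mul_of_nonneg_left hx (Real.sqrt_nonneg _)
    _ = _ := mul_one _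

lemma specNorm_nonneg {a b : ℕ} (W : Matrix (Fin a) (Fin b) ℝ) : 0 ≤ specNorm W := by
  apply le_csSup (specNorm_bddAbove W)
  exact ⟨0, by simp [eucNorm], by simp [eucNorm, Matrix.mulVec_zero]⟩

lemma eucNorm_mulVec_le {a b : ℕ} (W : Matrix (Fin a) (Fin b) ℝ) (x : Fin b → ℝ) :
    eucNorm (W.mulVec x) ≤ specNorm W * eucNorm x := by
  rcases eq_or_lt_of_le (eucNorm_nonneg x) with h0 | h0
  · have : x = 0 := eucNorm_eq_zero h0.symm
    subst this
    simp [Matrix.mulVec_zero, ← h0, eucNorm]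
  · have hx1 : eucNorm ((eucNorm x)⁻¹ • x) ≤ 1 := by
      rw [eucNorm_smul, abs_of_pos (inv_pos.mpr h0), inv_mul_cancel₀ (ne_of_gt h0)]
    have hmem : eucNorm (W.mulVec ((eucNorm x)⁻¹ • x)) ∈
        {c : ℝ | ∃ x : Fin b → ℝ, eucNorm x ≤ 1 ∧ c = eucNorm (W.mulVec x)} :=
      ⟨_, hx1, rfl⟩
    have hle := le_csSup (specNorm_bddAbove W) hmem
    rw [Matrix.mulVec_smul, eucNorm_smul, abs_of_pos (inv_pos.mpr h0)] at hle
    have := mul_le_mul_of_nonneg_right hle (le_of_lt h0)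
    rwa [mul_comm (eucNorm x)⁻¹ _, mul_assoc, inv_mul_cancel₀ (ne_of_gt h0), mul_one] at this

/-- exp of attention score of key `w` for query `q`. -/
noncomputable def Ew {s d : ℕ} (WQ WK : Matrix (Fin s) (Fin d) ℝ) (q w : Fin d → ℝ) : ℝ :=
  Real.exp (dotProduct (WK.mulVec w) (WQ.mulVec q))

/-- value vector of key `w`. -/
noncomputable def Vw {s' d : ℕ} (WV : Matrix (Fin s') (Fin d) ℝ)
    (WO : Matrix (Fin d) (Fin s') ℝ) (w : Fin d → ℝ) : Fin d → ℝ :=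
  WO.mulVec (WV.mulVec w)

lemma Ew_pos {s d : ℕ} (WQ WK : Matrix (Fin s) (Fin d) ℝ) (q w : Fin d → ℝ) :
    0 < Ew WQ WK q w := Real.exp_pos _

lemma headAtt_eq {s s' d m : ℕ}
    (WQ WK : Matrix (Fin s) (Fin d) ℝ) (WV : Matrix (Fin s') (Fin d) ℝ)
    (WO : Matrix (Fin d) (Fin s') ℝ)
    (q : Fin d → ℝ) (X : Matrix (Fin d) (Fin m) ℝ) :
    headAtt WQ WK WV WO q X =
      (∑ j, Ew WQ WK q (fun i => X i j))⁻¹ •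
        ∑ j, Ew WQ WK q (fun i => X i j) • Vw WV WO (fun i => X i j) := by
  unfold headAtt softmax Ew Vw
  rw [Finset.smul_sum]
  apply Finset.sum_congr rfl
  intro j _
  rw [div_eq_inv_mul, mul_smul]

lemma sum_col_hcat_two {d mp : ℕ} {α : Type*} [AddCommMonoid α]
    (P : Matrix (Fin d) (Fin mp) ℝ) (u v : Fin d → ℝ)
    (g : (Fin d → ℝ) → α) :
    ∑ j : Fin (mp + 2), g (fun i => hcat P (two u v) i j)
      = (∑ j : Fin mp, g (fun i => P i j)) + (g u + g v) := by
  rw [Fin.sum_univ_add]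
  congr 1
  · apply Finset.sum_congr rfl
    intro j _
    congr 1
    funext i
    simp [hcat, Fin.append_left]
  · rw [Fin.sum_univ_two]
    congr 1
    · congr 1
      funext i
      simp [hcat, two, Fin.append_right]
    · congr 1
      funext i
      simp [hcat, two, Fin.append_right]

lemma headAtt_hcat_two {s s' d mp : ℕ}
    (WQ WK : Matrix (Fin s) (Fin d) ℝ) (WV : Matrix (Fin s') (Fin d) ℝ)
    (WO : Matrix (Fin d) (Fin s') ℝ) (q u v : Fin d → ℝ)
    (P : Matrix (Fin d) (Fin mp) ℝ) :
    headAtt WQ WK WV WO q (hcat P (two u v)) =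
      ((∑ j, Ew WQ WK q (fun i => P i j)) + (Ew WQ WK q u + Ew WQ WK q v))⁻¹ •
      ((∑ j, Ew WQ WK q (fun i => P i j) • Vw WV WO (fun i => P i j)) +
        (Ew WQ WK q u • Vw WV WO u + Ew WQ WK q v • Vw WV WO v)) := by
  rw [headAtt_eq]
  rw [sum_col_hcat_two P u v (fun w => Ew WQ WK q w)]
  rw [sum_col_hcat_two P u v (fun w => Ew WQ WK q w • Vw WV WO w)]

lemma headAtt_two {s s' d : ℕ}
    (WQ WK : Matrix (Fin s) (Fin d) ℝ) (WV : Matrix (Fin s') (Fin d) ℝ)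
    (WO : Matrix (Fin d) (Fin s') ℝ) (q u v : Fin d → ℝ) :
    headAtt WQ WK WV WO q (two u v) =
      (Ew WQ WK q u + Ew WQ WK q v)⁻¹ •
        (Ew WQ WK q u • Vw WV WO u + Ew WQ WK q v • Vw WV WO v) := by
  rw [headAtt_eq]
  congr 1
  · rw [Fin.sum_univ_two]
    congr 1 <;> (congr 1; funext i; simp [two])
  · rw [Fin.sum_univ_two]
    congr 1 <;> (congr 2 <;> (funext i; simp [two]))

lemma eucNorm_sub_comm {n : ℕ} (u v : Fin n → ℝ) : eucNorm (u - v) = eucNorm (v - u) := by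
  unfold eucNorm
  congr 1
  apply Finset.sum_congr rfl
  intro i _
  simp only [Pi.sub_apply]
  ring

lemma mlp_injective {d dff : ℕ} {W1 : Matrix (Fin dff) (Fin d) ℝ}
    {W2 : Matrix (Fin d) (Fin dff) ℝ} {b1 : Fin dff → ℝ} {b2 : Fin d → ℝ}
    (hc : specNorm W1 * specNorm W2 < 1) {u v : Fin d → ℝ}
    (huv : mlp W1 W2 b1 b2 u = mlp W1 W2 b1 b2 v) : u = v := by
  have hdiff : u - v = W2.mulVec
      ((fun i => max (W1.mulVec v i + b1 i) 0) - fun i => max (W1.mulVec u i + b1 i) 0) := by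
    funext i
    have h1 := congrFun huv i
    simp only [mlp, Pi.add_apply] at h1
    rw [Pi.sub_apply, Matrix.mulVec_sub, Pi.sub_apply]
    linarith
  have hrel : eucNorm
      ((fun i => max (W1.mulVec v i + b1 i) 0) - fun i => max (W1.mulVec u i + b1 i) 0)
      ≤ eucNorm (W1.mulVec (v - u)) := by
    apply eucNorm_mono
    intro i
    have h2 : |max (W1.mulVec v i + b1 i) 0 - max (W1.mulVec u i + b1 i) 0|
        ≤ |(W1.mulVec v i + b1 i) - (W1.mulVec u i + b1 i)| := abs_max_sub_max_le_abs _ _ _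
    simp only [Pi.sub_apply]
    rw [Matrix.mulVec_sub, Pi.sub_apply]
    calc |max (W1.mulVec v i + b1 i) 0 - max (W1.mulVec u i + b1 i) 0|
        ≤ |(W1.mulVec v i + b1 i) - (W1.mulVec u i + b1 i)| := h2
      _ = |W1.mulVec v i - W1.mulVec u i| := by ring_nf
      _ ≤ |W1.mulVec v i - W1.mulVec u i| := le_refl _
  have hchain : eucNorm (u - v) ≤ specNorm W1 * specNorm W2 * eucNorm (u - v) := by
    calc eucNorm (u - v)
        = eucNorm (W2.mulVec _) := by rw [hdiff]
      _ ≤ specNorm W2 * eucNorm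
            ((fun i => max (W1.mulVec v i + b1 i) 0) - fun i => max (W1.mulVec u i + b1 i) 0) :=
          eucNorm_mulVec_le _ _
      _ ≤ specNorm W2 * eucNorm (W1.mulVec (v - u)) :=
          mul_le_mul_of_nonneg_left hrel (specNorm_nonneg _)
      _ ≤ specNorm W2 * (specNorm W1 * eucNorm (v - u)) :=
          mul_le_mul_of_nonneg_left (eucNorm_mulVec_le _ _) (specNorm_nonneg _)
      _ = specNorm W1 * specNorm W2 * eucNorm (v - u) := by ring
      _ = specNorm W1 * specNorm W2 * eucNorm (u - v) := by rw [eucNorm_sub_comm v u]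
  have hz : eucNorm (u - v) = 0 := by
    by_contra hne
    have hpos : 0 < eucNorm (u - v) := lt_of_le_of_ne (eucNorm_nonneg _) (Ne.symm hne)
    have : specNorm W1 * specNorm W2 * eucNorm (u - v) < 1 * eucNorm (u - v) :=
      mul_lt_mul_of_pos_right hc hpos
    rw [one_mul] at this
    linarith
  have := eucNorm_eq_zero hz
  exact sub_eq_zero.mp this

lemma dotProduct_finsum {n : ℕ} {ι : Type*} [Fintype ι] (u : Fin n → ℝ) (f : ι → Fin n → ℝ) :
    dotProduct u (∑ k, f k) = ∑ k, dotProduct u (f k) := by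
  simp only [dotProduct, Finset.sum_apply, Finset.mul_sum]
  exact Finset.sum_comm


/-- Universal form of the paper's Theorem 4: for any one-layer `h`-head transformer
whose MLP satisfies `‖W₁‖₂ ‖W₂‖₂ < 1`, and targets `yᵢ = MLP(y'ᵢ + x₀)` with the `y'ᵢ`
nonzero, pairwise orthogonal, and orthogonal to all head attentions
`aᵢᵏ = Attᵏ(x₀, [xᵢ, x₀])`, no pre-prompt `P` of any length makes the last column of
`τ([P, xᵢ, x₀])` equal to `yᵢ` for all `i`. -/
theorem one_layer_prompt_tuning_cannot_memorize
    {h s s' d dff : ℕ} (hh : 0 < h) (hd : 0 < d)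
    (WQ WK : Fin h → Matrix (Fin s) (Fin d) ℝ)
    (WV : Fin h → Matrix (Fin s') (Fin d) ℝ)
    (WO : Fin h → Matrix (Fin d) (Fin s') ℝ)
    (W1 : Matrix (Fin dff) (Fin d) ℝ) (W2 : Matrix (Fin d) (Fin dff) ℝ)
    (b1 : Fin dff → ℝ) (b2 : Fin d → ℝ)
    (hc : specNorm W1 * specNorm W2 < 1)
    (x0 : Fin d → ℝ) (x : Fin (h + 1) → Fin d → ℝ)
    (a : Fin (h + 1) → Fin h → Fin d → ℝ)
    (ha : ∀ i k, a i k = headAtt (WQ k) (WK k) (WV k) (WO k) x0 (two (x i) x0))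
    (y' : Fin (h + 1) → Fin d → ℝ)
    (hy'0 : ∀ i, y' i ≠ 0)
    (hy'y' : ∀ i j, i ≠ j → dotProduct (y' i) (y' j) = 0)
    (hy'a : ∀ i i' k, dotProduct (y' i) (a i' k) = 0)
    (y : Fin (h + 1) → Fin d → ℝ)
    (hy : ∀ i, y i = mlp W1 W2 b1 b2 (y' i + x0)) :
    ∀ (mp : ℕ) (P : Matrix (Fin d) (Fin mp) ℝ),
      ∃ i, (fun rr => tf WQ WK WV WO W1 W2 b1 b2
              (hcat P (two (x i) x0)) rr (Fin.last (mp + 1))) ≠ y i := by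
  intro mp P
  by_contra hcon
  push_neg at hcon
  -- the last column of [P, x i, x0] is x0
  have hlast : ∀ i : Fin (h + 1),
      (fun r => hcat P (two (x i) x0) r (Fin.last (mp + 1))) = x0 := by
    intro i
    funext r
    have hidx : (Fin.last (mp + 1) : Fin (mp + 2)) = Fin.natAdd mp (1 : Fin 2) := by
      ext
      simp [Fin.last, Fin.natAdd]
    show hcat P (two (x i) x0) r (Fin.last (mp + 1)) = x0 r
    rw [hidx]
    simp [hcat, two, Fin.append_right]
  -- notation for scores / values per head
  set E : Fin h → (Fin d → ℝ) → ℝ := fun k w => Ew (WQ k) (WK k) x0 w with hE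
  set V : Fin h → (Fin d → ℝ) → (Fin d → ℝ) := fun k w => Vw (WV k) (WO k) w with hV
  set ZP : Fin h → ℝ := fun k => ∑ j, E k (fun i => P i j) with hZP
  set SP : Fin h → (Fin d → ℝ) := fun k => ∑ j, E k (fun i => P i j) • V k (fun i => P i j)
    with hSP
  set z : Fin (h + 1) → Fin h → ℝ := fun i k => E k (x i) + E k x0 with hz
  have hzpos : ∀ i k, 0 < z i k := fun i k => add_pos (Ew_pos _ _ _ _) (Ew_pos _ _ _ _)
  have hZPpos : ∀ k, 0 ≤ ZP k :=
    fun k => Finset.sum_nonneg fun j _ => le_of_lt (Ew_pos _ _ _ _)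
  -- a i k in terms of E, V
  have haw : ∀ i k, (z i k) • a i k = E k (x i) • V k (x i) + E k x0 • V k x0 := by
    intro i k
    rw [ha i k, headAtt_two]
    rw [smul_inv_smul₀ (ne_of_gt (hzpos i k))]
  -- main equation : y' i = ∑ k, (ZP k + z i k)⁻¹ • (SP k + z i k • a i k)
  have hmain : ∀ i, y' i = ∑ k, (ZP k + z i k)⁻¹ • (SP k + (z i k) • a i k) := by
    intro i
    -- from the contradiction hypothesis
    have h1 := hcon i
    rw [hy i] at h1
    have h2 : (fun rr => tf WQ WK WV WO W1 W2 b1 b2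
        (hcat P (two (x i) x0)) rr (Fin.last (mp + 1))) =
        mlp W1 W2 b1 b2
          ((∑ k, headAtt (WQ k) (WK k) (WV k) (WO k) x0 (hcat P (two (x i) x0))) + x0) := by
      funext rr
      simp only [tf, Matrix.of_apply]
      rw [hlast i]
    rw [h2] at h1
    have h3 := mlp_injective hc h1
    have h4 : (∑ k, headAtt (WQ k) (WK k) (WV k) (WO k) x0 (hcat P (two (x i) x0))) = y' i :=
      add_right_cancel h3
    rw [← h4]
    apply Finset.sum_congr rfl
    intro k _
    rw [headAtt_hcat_two]
    rw [haw i k]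
  -- dot products
  have hdot : ∀ i j, dotProduct (y' j) (y' i) =
      ∑ k, (ZP k + z i k)⁻¹ * dotProduct (y' j) (SP k) := by
    intro i j
    conv_lhs => rw [hmain i]
    rw [dotProduct_finsum]
    apply Finset.sum_congr rfl
    intro k _
    rw [dotProduct_smul]
    rw [dotProduct_add, dotProduct_smul]
    rw [hy'a j i k]
    simp
  -- rank argument
  set G : Matrix (Fin (h + 1)) (Fin h) ℝ :=
    Matrix.of fun j k => dotProduct (y' j) (SP k) with hG
  set C : Matrix (Fin h) (Fin (h + 1)) ℝ :=
    Matrix.of fun k i => (ZP k + z i k)⁻¹ with hC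
  have hGC : G * C = Matrix.diagonal (fun i => dotProduct (y' i) (y' i)) := by
    ext j i
    rw [Matrix.mul_apply]
    by_cases hji : j = i
    · subst hji
      rw [Matrix.diagonal_apply_eq]
      rw [hdot j j]
      apply Finset.sum_congr rfl
      intro k _
      simp [hG, hC, mul_comm]
    · rw [Matrix.diagonal_apply_ne _ hji]
      have h5 : ∑ k, G j k * C k i
          = ∑ k, (ZP k + z i k)⁻¹ * dotProduct (y' j) (SP k) := by
        apply Finset.sum_congr rfl
        intro k _
        simp [hG, hC, mul_comm]
      rw [h5, ← hdot i j, hy'y' j i hji]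
  -- ranks
  have hdiagrank :
      (Matrix.diagonal (fun i => dotProduct (y' i) (y' i))).rank = h + 1 := by
    rw [Matrix.rank_diagonal]
    have hall : ∀ i : Fin (h + 1), dotProduct (y' i) (y' i) ≠ 0 := by
      intro i hzero
      exact hy'0 i (dotProduct_self_eq_zero.mp hzero)
    rw [Fintype.card_congr (Equiv.subtypeUnivEquiv hall)]
    simp
  have hrankle : (G * C).rank ≤ h := by
    calc (G * C).rank ≤ G.rank := Matrix.rank_mul_le_left G C
      _ ≤ h := Matrix.rank_le_width G
  rw [hGC, hdiagrank] at hrankle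
  omega
end

section
/- Let d and h be positive integers with d − h² − 2h > 0, and let τ be a one-layer transformer with h heads and embedding dimension d: τ(X)_{:,l} = MLP(Att(X_{:,l}, X) + X_{:,l}), where Att is h-head self-attention and MLP(x) = W_2 ReLU(W_1 x + b_1) + b_2 + x with ‖W_1‖₂·‖W_2‖₂ < 1. Then for all x_0, x_1, …, x_{h+1} ∈ ℝ^d there exist y_1, …, y_{h+1} ∈ ℝ^d such that for every m_p ∈ ℕ and every P ∈ ℝ^{d×m_p} there exists i ∈ {1,…,h+1} with the last column of τ([P, x_i, x_0]) different from y_i; that is, no pre-prompt of any length makes τ map [P, x_i, x_0] to an output whose last column is y_i simultaneously for all i. -/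
open Set

lemma llip_pi {α : Type*} [PseudoEMetricSpace α] {ι : Type*} [Fintype ι] {β : ι → Type*}
    [∀ i, PseudoEMetricSpace (β i)] {f : α → ∀ i, β i}
    (hcoord : ∀ i, LocallyLipschitz fun x => f x i) : LocallyLipschitz f := by
  intro x
  choose K t ht hK using fun i => hcoord i x
  refine ⟨Finset.univ.sup K, ⋂ i, t i, Filter.iInter_mem.2 ht, fun a ha b hb => ?_⟩
  rw [edist_pi_def]
  refine Finset.sup_le fun i _ => le_trans
    (hK i (Set.mem_iInter.1 ha i) (Set.mem_iInter.1 hb i)) ?_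
  exact mul_le_mul_left (ENNReal.coe_le_coe.2 (Finset.le_sup (Finset.mem_univ i))) _

lemma llip_sum {α : Type*} [PseudoEMetricSpace α] {E : Type*} [SeminormedAddCommGroup E]
    {ι : Type*} (s : Finset ι) (f : ι → α → E)
    (h : ∀ i ∈ s, LocallyLipschitz (f i)) :
    LocallyLipschitz (fun x => ∑ i ∈ s, f i x) := by
  classical
  induction s using Finset.induction_on with
  | empty => simpa using LocallyLipschitz.const (0 : E)
  | @insert a s ha ih =>
      simp only [Finset.sum_insert ha]
      exact (h a (Finset.mem_insert_self a s)).add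
        (ih fun i hi => h i (Finset.mem_insert_of_mem hi))

lemma llip_smul {α : Type*} [PseudoEMetricSpace α] {n : ℕ} {f : α → ℝ} {g : α → Fin n → ℝ}
    (hf : LocallyLipschitz f) (hg : LocallyLipschitz g) :
    LocallyLipschitz (fun x => f x • g x) := by
  have h : ContDiff ℝ 1 (fun q : ℝ × (Fin n → ℝ) => q.1 • q.2) :=
    contDiff_fst.smul contDiff_snd
  exact h.locallyLipschitz.comp (hf.prodMk hg)

lemma lipschitzWith_invMax {c : ℝ} (hc : 0 < c) :
    LipschitzWith ((c * c)⁻¹.toNNReal) (fun t : ℝ => (max t c)⁻¹) := by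
  refine LipschitzWith.of_dist_le_mul fun a b => ?_
  have hA : c ≤ max a c := le_max_right _ _
  have hB : c ≤ max b c := le_max_right _ _
  have hA0 : 0 < max a c := lt_of_lt_of_le hc hA
  have hB0 : 0 < max b c := lt_of_lt_of_le hc hB
  rw [Real.coe_toNNReal _ (by positivity), Real.dist_eq, Real.dist_eq]
  have key : (max a c)⁻¹ - (max b c)⁻¹ = (max b c - max a c) / (max a c * max b c) := by
    field_simp
  rw [key, abs_div]
  have h1 : |max b c - max a c| ≤ |a - b| := by
    rw [abs_sub_comm]
    exact abs_max_sub_max_le_abs _ _ _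
  have h2 : |max a c * max b c| = max a c * max b c := abs_of_pos (by positivity)
  rw [h2, div_le_iff₀ (by positivity)]
  calc |max b c - max a c| ≤ |a - b| := h1
    _ = (c * c)⁻¹ * |a - b| * (c * c) := by field_simp
    _ ≤ (c * c)⁻¹ * |a - b| * (max a c * max b c) := by
        gcongr

lemma llip_inv_of_le {α : Type*} [PseudoEMetricSpace α] {f : α → ℝ} {c : ℝ} (hc : 0 < c)
    (hf : LocallyLipschitz f) (hle : ∀ x, c ≤ f x) :
    LocallyLipschitz fun x => (f x)⁻¹ := by
  have he : (fun x => (f x)⁻¹) = (fun t : ℝ => (max t c)⁻¹) ∘ f := by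
    funext x
    simp [Function.comp, max_eq_left (hle x)]
  rw [he]
  exact (lipschitzWith_invMax hc).locallyLipschitz.comp hf

lemma llip_mulVec {a b : ℕ} (W : Matrix (Fin a) (Fin b) ℝ) :
    LocallyLipschitz (W.mulVec : (Fin b → ℝ) → (Fin a → ℝ)) := by
  have h := (LinearMap.toContinuousLinearMap (Matrix.mulVecLin W)).lipschitz.locallyLipschitz
  exact h

noncomputable def eW {s d : ℕ} (WQ WK : Matrix (Fin s) (Fin d) ℝ) (x0 w : Fin d → ℝ) : ℝ :=
  Real.exp (dotProduct (WK.mulVec w) (WQ.mulVec x0))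

noncomputable def uW {s' d : ℕ} (WV : Matrix (Fin s') (Fin d) ℝ)
    (WO : Matrix (Fin d) (Fin s') ℝ) (w : Fin d → ℝ) : Fin d → ℝ :=
  WO.mulVec (WV.mulVec w)

/-- Finite-dimensional parametrization of all achievable last-column outputs. -/
noncomputable def Fmap {h s s' d dff : ℕ}
    (WQ WK : Fin h → Matrix (Fin s) (Fin d) ℝ)
    (WV : Fin h → Matrix (Fin s') (Fin d) ℝ)
    (WO : Fin h → Matrix (Fin d) (Fin s') ℝ)
    (W1 : Matrix (Fin dff) (Fin d) ℝ) (W2 : Matrix (Fin d) (Fin dff) ℝ)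
    (b1 : Fin dff → ℝ) (b2 : Fin d → ℝ)
    (x0 : Fin d → ℝ) (x : Fin (h + 1) → Fin d → ℝ)
    (p : (Fin h → Fin d → ℝ) × (Fin h → ℝ)) : Fin (h + 1) → Fin d → ℝ :=
  fun i => mlp W1 W2 b1 b2
    ((∑ k, (|p.2 k| + (eW (WQ k) (WK k) x0 (x i) + eW (WQ k) (WK k) x0 x0))⁻¹ •
        (p.1 k + (eW (WQ k) (WK k) x0 (x i) • uW (WV k) (WO k) (x i) +
                  eW (WQ k) (WK k) x0 x0 • uW (WV k) (WO k) x0))) + x0)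

lemma att_split {d mp : ℕ} {A : Type*} [AddCommMonoid A]
    (P : Matrix (Fin d) (Fin mp) ℝ) (xi x0 : Fin d → ℝ) (G : (Fin d → ℝ) → A) :
    ∑ j : Fin (mp + 2), G (fun r => hcat P (two xi x0) r j)
      = (∑ j : Fin mp, G (fun r => P r j)) + (G xi + G x0) := by
  rw [Fin.sum_univ_add (f := fun j : Fin (mp + 2) => G (fun r => hcat P (two xi x0) r j))]
  congr 1
  · refine Finset.sum_congr rfl fun j _ => ?_
    congr 1
    funext r
    show Fin.append (P r) (![xi r, x0 r]) (Fin.castAdd 2 j) = P r j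
    rw [Fin.append_left]
  · rw [Fin.sum_univ_two]
    congr 1
    · congr 1
      funext r
      show Fin.append (P r) (![xi r, x0 r]) (Fin.natAdd mp 0) = xi r
      rw [Fin.append_right]
      simp
    · congr 1
      funext r
      show Fin.append (P r) (![xi r, x0 r]) (Fin.natAdd mp 1) = x0 r
      rw [Fin.append_right]
      simp

lemma tf_last_eq {h s s' d dff : ℕ}
    (WQ WK : Fin h → Matrix (Fin s) (Fin d) ℝ)
    (WV : Fin h → Matrix (Fin s') (Fin d) ℝ)
    (WO : Fin h → Matrix (Fin d) (Fin s') ℝ)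
    (W1 : Matrix (Fin dff) (Fin d) ℝ) (W2 : Matrix (Fin d) (Fin dff) ℝ)
    (b1 : Fin dff → ℝ) (b2 : Fin d → ℝ)
    (x0 xi : Fin d → ℝ) (mp : ℕ) (P : Matrix (Fin d) (Fin mp) ℝ) :
    (fun rr => tf WQ WK WV WO W1 W2 b1 b2 (hcat P (two xi x0)) rr (Fin.last (mp + 1)))
      = mlp W1 W2 b1 b2
        ((∑ k, (|∑ j : Fin mp, eW (WQ k) (WK k) x0 (fun r => P r j)| +
            (eW (WQ k) (WK k) x0 xi + eW (WQ k) (WK k) x0 x0))⁻¹ •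
          ((∑ j : Fin mp, eW (WQ k) (WK k) x0 (fun r => P r j) •
              uW (WV k) (WO k) (fun r => P r j)) +
            (eW (WQ k) (WK k) x0 xi • uW (WV k) (WO k) xi +
             eW (WQ k) (WK k) x0 x0 • uW (WV k) (WO k) x0))) + x0) := by
  have hlast : (fun r => hcat P (two xi x0) r (Fin.last (mp + 1))) = x0 := by
    funext r
    show Fin.append (P r) (![xi r, x0 r]) (Fin.last (mp + 1)) = x0 r
    have hl : (Fin.last (mp + 1) : Fin (mp + 2)) = Fin.natAdd mp (1 : Fin 2) := by
      apply Fin.ext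
      simp [Fin.natAdd]
    rw [hl, Fin.append_right]
    simp
  funext rr
  show mlp W1 W2 b1 b2
      ((∑ k, headAtt (WQ k) (WK k) (WV k) (WO k)
          (fun r => hcat P (two xi x0) r (Fin.last (mp + 1))) (hcat P (two xi x0))) +
        fun r => hcat P (two xi x0) r (Fin.last (mp + 1))) rr = _
  rw [hlast]
  refine congrFun (congrArg _ ?_) rr
  congr 1
  refine Finset.sum_congr rfl fun k _ => ?_
  show ∑ j : Fin (mp + 2),
      ((eW (WQ k) (WK k) x0 (fun r => hcat P (two xi x0) r j)) /
        ∑ l : Fin (mp + 2), eW (WQ k) (WK k) x0 (fun r => hcat P (two xi x0) r l)) •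
        uW (WV k) (WO k) (fun r => hcat P (two xi x0) r j) = _
  have hstep : ∀ j : Fin (mp + 2),
      ((eW (WQ k) (WK k) x0 (fun r => hcat P (two xi x0) r j)) /
        ∑ l : Fin (mp + 2), eW (WQ k) (WK k) x0 (fun r => hcat P (two xi x0) r l)) •
        uW (WV k) (WO k) (fun r => hcat P (two xi x0) r j)
      = (∑ l : Fin (mp + 2), eW (WQ k) (WK k) x0 (fun r => hcat P (two xi x0) r l))⁻¹ •
          (eW (WQ k) (WK k) x0 (fun r => hcat P (two xi x0) r j) •
            uW (WV k) (WO k) (fun r => hcat P (two xi x0) r j)) := fun j => by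
    rw [div_eq_inv_mul, mul_smul]
  rw [Finset.sum_congr rfl fun j _ => hstep j, ← Finset.smul_sum,
    att_split P xi x0 (fun w => eW (WQ k) (WK k) x0 w • uW (WV k) (WO k) w),
    att_split P xi x0 (eW (WQ k) (WK k) x0),
    abs_of_nonneg (Finset.sum_nonneg fun j _ =>
      le_of_lt (by unfold eW; exact Real.exp_pos _))]

lemma Fmap_locallyLipschitz {h s s' d dff : ℕ}
    (WQ WK : Fin h → Matrix (Fin s) (Fin d) ℝ)
    (WV : Fin h → Matrix (Fin s') (Fin d) ℝ)
    (WO : Fin h → Matrix (Fin d) (Fin s') ℝ)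
    (W1 : Matrix (Fin dff) (Fin d) ℝ) (W2 : Matrix (Fin d) (Fin dff) ℝ)
    (b1 : Fin dff → ℝ) (b2 : Fin d → ℝ)
    (x0 : Fin d → ℝ) (x : Fin (h + 1) → Fin d → ℝ) :
    LocallyLipschitz (Fmap WQ WK WV WO W1 W2 b1 b2 x0 x) := by
  have hmlp : LocallyLipschitz (mlp W1 W2 b1 b2) := by
    have hrelu : LocallyLipschitz (fun v : Fin dff → ℝ => fun j => max (v j) 0) :=
      llip_pi fun j => ((LipschitzWith.eval j).locallyLipschitz).max_const 0
    have hchain : LocallyLipschitz (fun w : Fin d → ℝ =>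
        W2.mulVec (fun j => max (W1.mulVec w j + b1 j) 0)) :=
      (llip_mulVec W2).comp (hrelu.comp ((llip_mulVec W1).add (LocallyLipschitz.const b1)))
    exact (hchain.add (LocallyLipschitz.const b2)).add LocallyLipschitz.id
  apply llip_pi
  intro i
  have hinner : LocallyLipschitz (fun p : (Fin h → Fin d → ℝ) × (Fin h → ℝ) =>
      (∑ k, (|p.2 k| + (eW (WQ k) (WK k) x0 (x i) + eW (WQ k) (WK k) x0 x0))⁻¹ •
        (p.1 k + (eW (WQ k) (WK k) x0 (x i) • uW (WV k) (WO k) (x i) +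
                  eW (WQ k) (WK k) x0 x0 • uW (WV k) (WO k) x0))) + x0) := by
    refine LocallyLipschitz.add ?_ (LocallyLipschitz.const x0)
    refine llip_sum Finset.univ _ fun k _ => ?_
    refine llip_smul ?_ ?_
    · refine llip_inv_of_le
        (c := eW (WQ k) (WK k) x0 (x i) + eW (WQ k) (WK k) x0 x0) ?_ ?_ ?_
      · exact add_pos (by unfold eW; exact Real.exp_pos _) (by unfold eW; exact Real.exp_pos _)
      · refine LocallyLipschitz.add ?_ (LocallyLipschitz.const _)
        have habs : (fun p : (Fin h → Fin d → ℝ) × (Fin h → ℝ) => |p.2 k|) =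
            (fun t : ℝ => ‖t‖) ∘ (Function.eval k ∘ Prod.snd) := by
          funext p
          simp [Real.norm_eq_abs, Function.comp, Function.eval]
        rw [habs]
        exact (lipschitzWith_one_norm.comp
          ((LipschitzWith.eval k).comp LipschitzWith.prod_snd)).locallyLipschitz
      · intro p
        exact le_add_of_nonneg_left (abs_nonneg _)
    · refine LocallyLipschitz.add ?_ (LocallyLipschitz.const _)
      exact ((LipschitzWith.eval k).comp LipschitzWith.prod_fst).locallyLipschitz
  exact hmlp.comp hinner

/-- Existential form of the paper's Theorem 4: if `d - h² - 2h > 0` and the MLP of a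
one-layer `h`-head transformer satisfies `‖W₁‖₂ ‖W₂‖₂ < 1`, then for all
`x₀, x₁, …, x_{h+1}` there exist targets `y₁, …, y_{h+1}` that no pre-prompt of any
length can simultaneously memorize. -/
theorem one_layer_prompt_tuning_limited_expressivity
    {h s s' d dff : ℕ} (hh : 0 < h) (hdh : h ^ 2 + 2 * h < d)
    (WQ WK : Fin h → Matrix (Fin s) (Fin d) ℝ)
    (WV : Fin h → Matrix (Fin s') (Fin d) ℝ)
    (WO : Fin h → Matrix (Fin d) (Fin s') ℝ)
    (W1 : Matrix (Fin dff) (Fin d) ℝ) (W2 : Matrix (Fin d) (Fin dff) ℝ)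
    (b1 : Fin dff → ℝ) (b2 : Fin d → ℝ)
    (hc : specNorm W1 * specNorm W2 < 1)
    (x0 : Fin d → ℝ) (x : Fin (h + 1) → Fin d → ℝ) :
    ∃ y : Fin (h + 1) → Fin d → ℝ,
      ∀ (mp : ℕ) (P : Matrix (Fin d) (Fin mp) ℝ),
        ∃ i, (fun rr => tf WQ WK WV WO W1 W2 b1 b2
                (hcat P (two (x i) x0)) rr (Fin.last (mp + 1))) ≠ y i := by
  classical
  have hne : ∃ y, y ∉ Set.range (Fmap WQ WK WV WO W1 W2 b1 b2 x0 x) := by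
    by_contra hcon
    push_neg at hcon
    have huniv : Set.range (Fmap WQ WK WV WO W1 W2 b1 b2 x0 x) = Set.univ :=
      Set.eq_univ_of_forall hcon
    have h1 := dimH_range_le_of_locally_lipschitzOn
      (Fmap_locallyLipschitz WQ WK WV WO W1 W2 b1 b2 x0 x)
    rw [huniv, Real.dimH_univ_eq_finrank, Real.dimH_univ_eq_finrank] at h1
    have h2 : Module.finrank ℝ (Fin (h + 1) → Fin d → ℝ) ≤
        Module.finrank ℝ ((Fin h → Fin d → ℝ) × (Fin h → ℝ)) := by exact_mod_cast h1
    have e1 : Module.finrank ℝ (Fin (h + 1) → Fin d → ℝ) = (h + 1) * d := by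
      simp [Module.finrank_pi_fintype, Module.finrank_fin_fun, Finset.sum_const,
        Finset.card_univ, mul_comm]
    have e2 : Module.finrank ℝ ((Fin h → Fin d → ℝ) × (Fin h → ℝ)) = h * d + h := by
      rw [Module.finrank_prod]
      simp [Module.finrank_pi_fintype, Module.finrank_fin_fun, Finset.sum_const,
        Finset.card_univ, mul_comm]
    rw [e1, e2] at h2
    have hhd : h < d := lt_of_le_of_lt (by nlinarith) hdh
    nlinarith
  obtain ⟨y, hy⟩ := hne
  refine ⟨y, fun mp P => ?_⟩
  by_contra hall
  push_neg at hall
  apply hy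
  refine ⟨(fun k => ∑ j : Fin mp, eW (WQ k) (WK k) x0 (fun r => P r j) •
      uW (WV k) (WO k) (fun r => P r j),
    fun k => ∑ j : Fin mp, eW (WQ k) (WK k) x0 (fun r => P r j)), ?_⟩
  funext i
  rw [← hall i, tf_last_eq WQ WK WV WO W1 W2 b1 b2 x0 (x i) mp P]
  rfl
end
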